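/- Let p be a prime with p ≡ 1 (mod 16), let α be a generator of the multiplicative group of ℤ/pℤ, let C_i (indices mod 8) be the order-8 cyclotomic cosets, and let (i,j) (indices mod 8) be the order-8 cyclotomic numbers. Let S = C_0 ∪ C_3 and T = C_4 ∪ C_7. Then for every ℓ with 0 ≤ ℓ ≤ 7 and every h ∈ C_ℓ, the number of pairs (s,t) with s ∈ S, t ∈ T, and s + t = h equals z_ℓ := (4,ℓ) + (7,ℓ) + (1,ℓ−3) + (4,ℓ−3) (indices taken mod 8); moreover z_ℓ = z_{ℓ+4} for 0 ≤ ℓ ≤ 3. -/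

import Mathlib

/-!
Write `(i, j)` for the number of `x ∈ C i`, `y ∈ C j` with `1 + x = y`. For `h ∈ C ℓ`, the map
`(s, t) ↦ (t / s, h / s)` sends the representations `h = s + t` with `s ∈ C a`, `t ∈ C b`
bijectively onto the solutions counted by `(b - a, ℓ - a)`, since `1 + t / s = h / s`. Splitting
`S × T` into its four products of classes gives `z ℓ`. The periodicity `z ℓ = z (ℓ + 4)` follows
from `(i, j) = (-i, j - i)`, realised by `(x, y) ↦ (1 / x, y / x)`, and the 8-periodicity of the
classes.
-/

open Set

namespace Set

variable {M : Type*} [Add M] [Finite M] {A A₁ A₂ B B₁ B₂ : Set M} {h : M}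

lemma ncard_antidiagonal_union_left (hA : Disjoint A₁ A₂) :
    (antidiagonal (A₁ ∪ A₂) B h).ncard =
      (antidiagonal A₁ B h).ncard + (antidiagonal A₂ B h).ncard := by
  rw [← ncard_union_eq ((hA.preimage Prod.fst).mono (fun _ hst ↦ hst.1) fun _ hst ↦ hst.1)]
  congr 1
  ext st
  simp only [mem_antidiagonal, mem_union]
  tauto

lemma ncard_antidiagonal_union_right (hB : Disjoint B₁ B₂) :
    (antidiagonal A (B₁ ∪ B₂) h).ncard =
      (antidiagonal A B₁ h).ncard + (antidiagonal A B₂ h).ncard := by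
  rw [← ncard_union_eq ((hB.preimage Prod.snd).mono (fun _ hst ↦ hst.2.1) fun _ hst ↦ hst.2.1)]
  congr 1
  ext st
  simp only [mem_antidiagonal, mem_union]
  tauto

end Set

section Cyclotomy

variable {F : Type*} [Field F] (α : Fˣ) (e : ℤ)

def cyclotomicClass (i : ℤ) : Set F :=
  {x | ∃ v : ℤ, x = ((α ^ (e * v + i) : Fˣ) : F)}

noncomputable def cyclotomicNumber (i j : ℤ) : ℕ :=
  {xy : F × F | xy.1 ∈ cyclotomicClass α e i ∧ xy.2 ∈ cyclotomicClass α e j ∧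
    1 + xy.1 = xy.2}.ncard

variable {α e} {i j i' j' : ℤ} {x y : F}

lemma mem_cyclotomicClass_iff :
    x ∈ cyclotomicClass α e i ↔ ∃ n : ℤ, x = ((α ^ n : Fˣ) : F) ∧ e ∣ n - i := by
  constructor
  · rintro ⟨v, rfl⟩
    exact ⟨_, rfl, v, by ring⟩
  · rintro ⟨n, rfl, v, hv⟩
    exact ⟨v, by rw [show e * v + i = n by linarith]⟩

lemma cyclotomicClass_congr (h : e ∣ i - j) :
    cyclotomicClass α e i = cyclotomicClass (F := F) α e j := by
  ext x
  simp only [mem_cyclotomicClass_iff]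
  refine exists_congr fun n ↦ and_congr_right' ⟨fun hn ↦ ?_, fun hn ↦ ?_⟩
  · simpa using dvd_add hn h
  · simpa using dvd_sub hn h

lemma ne_zero_of_mem_cyclotomicClass (hx : x ∈ cyclotomicClass α e i) : x ≠ 0 := by
  obtain ⟨v, rfl⟩ := hx
  exact Units.ne_zero _

lemma mul_mem_cyclotomicClass (hx : x ∈ cyclotomicClass α e i)
    (hy : y ∈ cyclotomicClass α e j) : x * y ∈ cyclotomicClass α e (i + j) := by
  obtain ⟨v, rfl⟩ := hx
  obtain ⟨w, rfl⟩ := hy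
  exact ⟨v + w, by rw [← Units.val_mul, ← zpow_add]; ring_nf⟩

lemma inv_mem_cyclotomicClass (hx : x ∈ cyclotomicClass α e i) :
    x⁻¹ ∈ cyclotomicClass α e (-i) := by
  obtain ⟨v, rfl⟩ := hx
  exact ⟨-v, by rw [← Units.val_inv_eq_inv_val, ← zpow_neg]; ring_nf⟩

lemma div_mem_cyclotomicClass (hx : x ∈ cyclotomicClass α e i)
    (hy : y ∈ cyclotomicClass α e j) : x / y ∈ cyclotomicClass α e (i - j) := by
  rw [div_eq_mul_inv, sub_eq_add_neg]
  exact mul_mem_cyclotomicClass hx (inv_mem_cyclotomicClass hy)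

lemma dvd_sub_of_mem_cyclotomicClass (he : e ∣ orderOf α) (hi : x ∈ cyclotomicClass α e i)
    (hj : x ∈ cyclotomicClass α e j) : e ∣ i - j := by
  obtain ⟨v, rfl⟩ := hi
  obtain ⟨w, hw⟩ := hj
  have h : e ∣ (e * w + j) - (e * v + i) :=
    he.trans (zpow_eq_zpow_iff_modEq.1 (Units.ext hw)).dvd
  rw [show i - j = e * (w - v) - ((e * w + j) - (e * v + i)) by ring]
  exact dvd_sub (dvd_mul_right _ _) h

lemma disjoint_cyclotomicClass (he : e ∣ orderOf α) (hij : ¬ e ∣ i - j) :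
    Disjoint (cyclotomicClass α e i) (cyclotomicClass (F := F) α e j) :=
  disjoint_left.2 fun _ hi hj ↦ hij (dvd_sub_of_mem_cyclotomicClass he hi hj)

lemma cyclotomicNumber_congr (hi : e ∣ i - i') (hj : e ∣ j - j') :
    cyclotomicNumber α e i j = cyclotomicNumber α e i' j' := by
  rw [cyclotomicNumber, cyclotomicClass_congr hi, cyclotomicClass_congr hj, cyclotomicNumber]

lemma cyclotomicNumber_emod_right : cyclotomicNumber α e i (j % e) = cyclotomicNumber α e i j :=
  cyclotomicNumber_congr (by simp) (Int.mod_modEq j e).symm.dvd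

lemma cyclotomicNumber_neg_sub (i j : ℤ) :
    cyclotomicNumber α e i j = cyclotomicNumber α e (-i) (j - i) := by
  set φ : F × F → F × F := fun xy ↦ (xy.1⁻¹, xy.2 / xy.1)
  have hmaps : ∀ i j : ℤ, MapsTo φ
      {xy | xy.1 ∈ cyclotomicClass α e i ∧ xy.2 ∈ cyclotomicClass α e j ∧ 1 + xy.1 = xy.2}
      {xy | xy.1 ∈ cyclotomicClass α e (-i) ∧ xy.2 ∈ cyclotomicClass α e (j - i) ∧
        1 + xy.1 = xy.2} := by
    rintro i j ⟨x, y⟩ ⟨hx, hy, hxy : 1 + x = y⟩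
    have hx0 : x ≠ 0 := ne_zero_of_mem_cyclotomicClass hx
    refine ⟨inv_mem_cyclotomicClass hx, div_mem_cyclotomicClass hy hx, ?_⟩
    simp only [φ, ← hxy]
    field_simp
    ring
  have hinv : LeftInvOn φ φ {xy : F × F | xy.1 ≠ 0} := by
    rintro ⟨x, y⟩ (hx : x ≠ 0)
    simp [φ, hx]
  refine (InvOn.bijOn ⟨hinv.mono fun _ h ↦ ne_zero_of_mem_cyclotomicClass h.1,
    hinv.mono fun _ h ↦ ne_zero_of_mem_cyclotomicClass h.1⟩ (hmaps i j) ?_).ncard_eq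
  simpa using hmaps (-i) (j - i)

lemma ncard_antidiagonal_cyclotomicClass {a b ℓ : ℤ} {h : F} (hh : h ∈ cyclotomicClass α e ℓ) :
    (antidiagonal (cyclotomicClass α e a) (cyclotomicClass α e b) h).ncard =
      cyclotomicNumber α e (b - a) (ℓ - a) := by
  have hh0 := ne_zero_of_mem_cyclotomicClass hh
  refine (InvOn.bijOn (f := fun st ↦ (st.2 / st.1, h / st.1))
    (f' := fun xy ↦ (h / xy.2, xy.1 * h / xy.2)) ⟨?_, ?_⟩ ?_ ?_).ncard_eq
  · rintro ⟨s, t⟩ ⟨hs, -, -⟩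
    have hs0 := ne_zero_of_mem_cyclotomicClass hs
    simp only [Prod.mk.injEq]
    constructor <;> field_simp
  · rintro ⟨x, y⟩ ⟨-, hy, -⟩
    have hy0 := ne_zero_of_mem_cyclotomicClass hy
    simp only [Prod.mk.injEq]
    constructor <;> field_simp
  · rintro ⟨s, t⟩ ⟨hs, ht, hst : s + t = h⟩
    have hs0 := ne_zero_of_mem_cyclotomicClass hs
    refine ⟨div_mem_cyclotomicClass ht hs, div_mem_cyclotomicClass hh hs, ?_⟩
    simp only [← hst]
    field_simp
  · rintro ⟨x, y⟩ ⟨hx, hy, hxy : 1 + x = y⟩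
    have hy0 : y ≠ 0 := ne_zero_of_mem_cyclotomicClass hy
    refine ⟨?_, ?_, ?_⟩
    · simpa using div_mem_cyclotomicClass hh hy
    · convert div_mem_cyclotomicClass (mul_mem_cyclotomicClass hx hh) hy using 2
      ring
    · show h / y + x * h / y = h
      field_simp
      linear_combination hxy

lemma injOn_val_zpow_mul_add {f : ℕ} (h0 : orderOf α ≠ 0) (hord : (orderOf α : ℤ) = e * f)
    (c : ℤ) : InjOn (fun u : ℕ ↦ ((α ^ (e * u + c) : Fˣ) : F)) (Iio f) := by
  intro u hu u' hu' huu'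
  have he : e ≠ 0 := by rintro rfl; simp_all
  have h := zpow_eq_zpow_iff_modEq.1 (Units.ext huu')
  rw [hord] at h
  exact Nat.ModEq.eq_of_lt_of_lt
    (Int.natCast_modEq_iff.1 ((Int.ModEq.add_right_cancel' c h).mul_left_cancel' he)) hu hu'

lemma cyclotomicClass_eq_image {f : ℕ} (hord : (orderOf α : ℤ) = e * f) (hf : f ≠ 0) (c : ℤ) :
    cyclotomicClass α e c = (fun u : ℕ ↦ ((α ^ (e * u + c) : Fˣ) : F)) '' Iio f := by
  refine Subset.antisymm ?_ fun _ ⟨u, _, hu⟩ ↦ ⟨u, hu.symm⟩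
  rintro _ ⟨v, rfl⟩
  have hv : (((v % f).toNat : ℕ) : ℤ) = v % f := Int.toNat_of_nonneg (Int.emod_nonneg v (by omega))
  refine ⟨(v % f).toNat, by simpa [← Int.ofNat_lt, hv] using Int.emod_lt_of_pos v (by omega), ?_⟩
  simp only [Units.val_inj]
  rw [zpow_eq_zpow_iff_modEq, hord, hv]
  exact (((Int.mod_modEq v f).mul_left' (c := e)).add_right c)

lemma cyclotomicNumber_eq_card_filter [DecidableEq F] {f : ℕ} (h0 : orderOf α ≠ 0)
    (hord : (orderOf α : ℤ) = e * f) (i j : ℤ) :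
    cyclotomicNumber α e i j = (Finset.filter
      (fun uv : ℕ × ℕ ↦ (1 : F) + ((α ^ (e * (uv.1 : ℤ) + i) : Fˣ) : F)
        = ((α ^ (e * (uv.2 : ℤ) + j) : Fˣ) : F))
      (Finset.range f ×ˢ Finset.range f)).card := by
  have hf : f ≠ 0 := by rintro rfl; simp_all
  rw [← Set.ncard_coe_finset, Finset.coe_filter, cyclotomicNumber,
    cyclotomicClass_eq_image hord hf, cyclotomicClass_eq_image hord hf,
    ← (((injOn_val_zpow_mul_add h0 hord i).prodMap
      (injOn_val_zpow_mul_add h0 hord j)).mono fun uv huv ↦ ?_).ncard_image]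
  · congr 1
    ext ⟨x, y⟩
    simp only [mem_image, mem_Iio, mem_ofPred_eq, Finset.mem_product, Finset.mem_range,
      Prod.mk.injEq, Prod.exists]
    constructor
    · rintro ⟨⟨u, hu, rfl⟩, ⟨v, hv, rfl⟩, h⟩
      exact ⟨u, v, ⟨⟨hu, hv⟩, h⟩, rfl, rfl⟩
    · rintro ⟨u, v, ⟨⟨hu, hv⟩, h⟩, rfl, rfl⟩
      exact ⟨⟨u, hu, rfl⟩, ⟨v, hv, rfl⟩, h⟩
  · simpa using huv.1

end Cyclotomy

/-- Let `p ≡ 1 (mod 16)` be prime, `α` a generator of `(ℤ/pℤ)ˣ`, `C i` the order-8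
cyclotomic cosets and `N i j` the order-8 cyclotomic numbers (indices mod 8). With
`S = C 0 ∪ C 3` and `T = C 4 ∪ C 7`, for `0 ≤ ℓ ≤ 7` and `h ∈ C ℓ` the number of
pairs `(s, t) ∈ S × T` with `s + t = h` equals
`z ℓ = N 4 ℓ + N 7 ℓ + N 1 (ℓ- 3) + N 4 (ℓ- 3)`, and `z ℓ = z (ℓ+4)` for `0 ≤ ℓ ≤ 3`. -/
theorem stmt_15 (p : ℕ) (hp : p.Prime) (h16 : p % 16 = 1)
    (α : (ZMod p)ˣ) (hα : ∀ x : (ZMod p)ˣ, x ∈ Subgroup.zpowers α)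
    (C : ℤ → Set (ZMod p))
    (hC : ∀ i : ℤ, C i = {x : ZMod p | ∃ v : ℤ, x = ((α ^ (8 * v + i) : (ZMod p)ˣ) : ZMod p)})
    (N : ℤ → ℤ → ℕ)
    (hN : ∀ i j : ℤ, N i j = (Finset.filter
      (fun uv : ℕ × ℕ => (1 : ZMod p) + ((α ^ (8 * (uv.1 : ℤ) + i) : (ZMod p)ˣ) : ZMod p)
        = ((α ^ (8 * (uv.2 : ℤ) + j) : (ZMod p)ˣ) : ZMod p))
      (Finset.range ((p - 1) / 8) ×ˢ Finset.range ((p - 1) / 8))).card)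
    (S T : Set (ZMod p)) (hS : S = C 0 ∪ C 3) (hT : T = C 4 ∪ C 7)
    (z : ℤ → ℕ)
    (hz : ∀ ℓ : ℤ, z ℓ = N 4 (ℓ % 8) + N 7 (ℓ % 8)
      + N 1 ((ℓ - 3) % 8) + N 4 ((ℓ - 3) % 8)) :
    (∀ ℓ : ℤ, 0 ≤ ℓ → ℓ ≤ 7 → ∀ h ∈ C ℓ,
      {st : ZMod p × ZMod p | st.1 ∈ S ∧ st.2 ∈ T ∧ st.1 + st.2 = h}.ncard = z ℓ) ∧
    (∀ ℓ : ℤ, 0 ≤ ℓ → ℓ ≤ 3 → z ℓ = z (ℓ + 4)) := by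
  have := Fact.mk hp
  have h0 : orderOf α ≠ 0 := (orderOf_pos α).ne'
  have hord : (orderOf α : ℤ) = 8 * ((p - 1) / 8 : ℕ) := by
    rw [orderOf_eq_card_of_forall_mem_zpowers hα, Nat.card_eq_fintype_card, ZMod.card_units]
    omega
  obtain rfl : C = cyclotomicClass α 8 := funext hC
  obtain rfl : N = cyclotomicNumber α 8 :=
    funext₂ fun i j ↦ (hN i j).trans (cyclotomicNumber_eq_card_filter h0 hord i j).symm
  simp only [cyclotomicNumber_emod_right] at hz
  refine ⟨fun ℓ _ _ h hh ↦ ?_, fun ℓ _ _ ↦ ?_⟩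
  · have hdisj : ∀ i j : ℤ, ¬ 8 ∣ i - j →
        Disjoint (cyclotomicClass α 8 i) (cyclotomicClass α 8 j) :=
      fun _ _ ↦ disjoint_cyclotomicClass ⟨_, hord⟩
    subst hS hT
    change (antidiagonal _ _ h).ncard = _
    rw [ncard_antidiagonal_union_left (hdisj 0 3 (by decide)),
      ncard_antidiagonal_union_right (hdisj 4 7 (by decide)),
      ncard_antidiagonal_union_right (hdisj 4 7 (by decide))]
    simp only [ncard_antidiagonal_cyclotomicClass hh, hz]
    norm_num [add_assoc]
  · have key : ∀ {i j i' j' : ℤ}, 8 ∣ -i - i' → 8 ∣ j - i - j' →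
        cyclotomicNumber α 8 i j = cyclotomicNumber α 8 i' j' :=
      fun hi hj ↦ (cyclotomicNumber_neg_sub _ _).trans (cyclotomicNumber_congr hi hj)
    have h₁ : cyclotomicNumber α 8 4 (ℓ + 4) = cyclotomicNumber α 8 4 ℓ := key (by omega) (by omega)
    have h₂ : cyclotomicNumber α 8 7 (ℓ + 4) = cyclotomicNumber α 8 1 (ℓ - 3) :=
      key (by omega) (by omega)
    have h₃ : cyclotomicNumber α 8 1 (ℓ + 4 - 3) = cyclotomicNumber α 8 7 ℓ :=
      key (by omega) (by omega)
    have h₄ : cyclotomicNumber α 8 4 (ℓ + 4 - 3) = cyclotomicNumber α 8 4 (ℓ - 3) :=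
      key (by omega) (by omega)
    rw [hz, hz]
    omega
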